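/- arXiv:1711.03197 — 6 statements merged into one kernel-verified Lean document; each statement's English description precedes it below -/
import Mathlib

section
/- Let A be an n×n real symmetric positive definite matrix and J the exchange matrix. Then tr(A⁻¹) ≥ tr(((A + JAJ)/2)⁻¹), with equality if and only if A = JAJ. -/
open Matrix

/-- The `n × n` exchange matrix: ones on the anti-diagonal, zeros elsewhere. -/
def exchangeMatrix (n : ℕ) : Matrix (Fin n) (Fin n) ℝ :=
  Matrix.of fun i j => if j = i.rev then 1 else 0

/-!
For positive definite `A` and `B` one has the identity
`A⁻¹ + B⁻¹ - 4 (A + B)⁻¹ = X (A⁻¹ + B⁻¹)⁻¹ X` with the Hermitian `X = A⁻¹ - B⁻¹`; the right-hand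
side is positive semidefinite and vanishes only when `X = 0`, so taking traces gives
`4 tr (A + B)⁻¹ ≤ tr A⁻¹ + tr B⁻¹` with equality exactly when `A = B`.
For `B = JAJ`, which is `A` with rows and columns reversed, `B` is again positive definite and
`tr B⁻¹ = tr A⁻¹`.
-/

namespace Matrix

variable {m : Type*} [Fintype m] [DecidableEq m]

section CommRing

variable {K : Type*} [CommRing K]

theorem sub_mul_inv_add_mul_sub {a b : Matrix m m K} (h : IsUnit (a + b).det) :
    (a - b) * (a + b)⁻¹ * (a - b) = a + b - 4 • (b * (a + b)⁻¹ * a) := by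
  have h₁ := mul_nonsing_inv _ h
  have h₂ := nonsing_inv_mul _ h
  set T := (a + b)⁻¹
  calc (a - b) * T * (a - b)
      = a + b - 4 • (b * T * a) + ((a + b) * T - 1) * (a - b)
          + 2 • (b * (T * (a + b) - 1)) := by
        noncomm_ring
    _ = a + b - 4 • (b * T * a) := by rw [h₁, h₂]; simp

theorem inv_add_eq_inv_mul_inv_add_inv_mul_inv {A B : Matrix m m K} (hA : IsUnit A.det)
    (hB : IsUnit B.det) : (A + B)⁻¹ = B⁻¹ * (A⁻¹ + B⁻¹)⁻¹ * A⁻¹ := by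
  rw [← Matrix.mul_inv_rev, ← Matrix.mul_inv_rev, add_mul, nonsing_inv_mul _ hB, mul_add,
    ← mul_assoc, mul_nonsing_inv _ hA, one_mul, mul_one, add_comm]

theorem trace_inv_submatrix_equiv {n : Type*} [Fintype n] [DecidableEq n]
    (A : Matrix m m K) (e : n ≃ m) : (A.submatrix e e)⁻¹.trace = A⁻¹.trace := by
  rw [inv_submatrix_equiv]
  exact e.sum_comp A⁻¹.diag

end CommRing

section RCLike

open scoped ComplexOrder MatrixOrder

variable {𝕜 : Type*} [RCLike 𝕜] {A B : Matrix m m 𝕜}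

theorem PosDef.isUnit_det (hA : A.PosDef) : IsUnit A.det :=
  (isUnit_iff_isUnit_det A).mp hA.isUnit

theorem PosDef.conjTranspose_mul_mul_same_eq_zero_iff (hA : A.PosDef) :
    Bᴴ * A * B = 0 ↔ B = 0 := by
  obtain ⟨C, hC, rfl⟩ := CStarAlgebra.isStrictlyPositive_iff_eq_star_mul_self.mp
    hA.isStrictlyPositive
  rw [star_eq_conjTranspose,
    show Bᴴ * (Cᴴ * C) * B = (C * B)ᴴ * (C * B) by simp only [conjTranspose_mul, Matrix.mul_assoc],
    conjTranspose_mul_self_eq_zero, hC.mul_right_eq_zero]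

theorem PosDef.inv_add_inv_sub_four_smul_inv_add (hA : A.PosDef) (hB : B.PosDef) :
    A⁻¹ + B⁻¹ - 4 • (A + B)⁻¹ = (A⁻¹ - B⁻¹) * (A⁻¹ + B⁻¹)⁻¹ * (A⁻¹ - B⁻¹) := by
  rw [sub_mul_inv_add_mul_sub (hA.inv.add hB.inv).isUnit_det,
    ← inv_add_eq_inv_mul_inv_add_inv_mul_inv hA.isUnit_det hB.isUnit_det]

theorem PosDef.posSemidef_inv_add_inv_sub_four_smul_inv_add (hA : A.PosDef) (hB : B.PosDef) :
    (A⁻¹ + B⁻¹ - 4 • (A + B)⁻¹).PosSemidef := by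
  rw [hA.inv_add_inv_sub_four_smul_inv_add hB]
  simpa [hA.inv.isHermitian.eq, hB.inv.isHermitian.eq] using
    (hA.inv.add hB.inv).inv.posSemidef.conjTranspose_mul_mul_same (A⁻¹ - B⁻¹)

theorem PosDef.inv_add_inv_sub_four_smul_inv_add_eq_zero_iff (hA : A.PosDef) (hB : B.PosDef) :
    A⁻¹ + B⁻¹ - 4 • (A + B)⁻¹ = 0 ↔ A = B := by
  have hX : (A⁻¹ - B⁻¹)ᴴ = A⁻¹ - B⁻¹ := by
    simp [hA.inv.isHermitian.eq, hB.inv.isHermitian.eq]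
  rw [hA.inv_add_inv_sub_four_smul_inv_add hB]
  nth_rw 1 [← hX]
  rw [(hA.inv.add hB.inv).inv.conjTranspose_mul_mul_same_eq_zero_iff, sub_eq_zero]
  exact ⟨fun h => inv_inj h hA.isUnit_det, fun h => h ▸ rfl⟩

theorem PosDef.four_mul_trace_inv_add_le (hA : A.PosDef) (hB : B.PosDef) :
    4 * (A + B)⁻¹.trace ≤ A⁻¹.trace + B⁻¹.trace := by
  have := (hA.posSemidef_inv_add_inv_sub_four_smul_inv_add hB).trace_nonneg
  rwa [trace_sub, trace_add, trace_smul, nsmul_eq_mul, Nat.cast_ofNat, sub_nonneg] at this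

theorem PosDef.four_mul_trace_inv_add_eq_iff (hA : A.PosDef) (hB : B.PosDef) :
    4 * (A + B)⁻¹.trace = A⁻¹.trace + B⁻¹.trace ↔ A = B := by
  rw [← hA.inv_add_inv_sub_four_smul_inv_add_eq_zero_iff hB,
    ← (hA.posSemidef_inv_add_inv_sub_four_smul_inv_add hB).trace_eq_zero_iff,
    trace_sub, trace_add, trace_smul, nsmul_eq_mul, Nat.cast_ofNat, sub_eq_zero, eq_comm]

end RCLike

end Matrix

theorem exchangeMatrix_mul_mul_exchangeMatrix {n : ℕ} (A : Matrix (Fin n) (Fin n) ℝ) :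
    exchangeMatrix n * A * exchangeMatrix n = A.submatrix Fin.rev Fin.rev := by
  ext i j
  simp [exchangeMatrix, mul_apply, eq_comm (a := j), Fin.rev_eq_iff]

theorem trace_inv_ge_trace_inv_average_general
    (n : ℕ) (A : Matrix (Fin n) (Fin n) ℝ) (hA : A.PosDef) :
    ((((1 : ℝ)/2) • (A + exchangeMatrix n * A * exchangeMatrix n))⁻¹).trace ≤
        (A⁻¹).trace ∧
      (((((1 : ℝ)/2) • (A + exchangeMatrix n * A * exchangeMatrix n))⁻¹).trace =
          (A⁻¹).trace ↔ A = exchangeMatrix n * A * exchangeMatrix n) := by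
  rw [exchangeMatrix_mul_mul_exchangeMatrix]
  set B := A.submatrix Fin.rev Fin.rev
  have hB : B.PosDef := hA.submatrix Fin.rev_injective
  have htrB : B⁻¹.trace = A⁻¹.trace := A.trace_inv_submatrix_equiv Fin.revPerm
  have hhalf : (((1 : ℝ)/2) • (A + B))⁻¹.trace = 2 * (A + B)⁻¹.trace := by
    have : Invertible ((1 : ℝ)/2) := invertibleOfNonzero (by norm_num)
    rw [Matrix.inv_smul _ _ (hA.add hB).isUnit_det, trace_smul, invOf_eq_inv, smul_eq_mul]
    norm_num
  have hle := hA.four_mul_trace_inv_add_le hB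
  have heq := hA.four_mul_trace_inv_add_eq_iff hB
  rw [hhalf, ← heq]
  exact ⟨by linarith, fun h => by linarith, fun h => by linarith⟩

/-- For a real symmetric positive definite `A` and the exchange matrix `J`,
`tr(A⁻¹) ≥ tr(((A + JAJ)/2)⁻¹)`, with equality if and only if `A = JAJ`. -/
theorem trace_inv_ge_trace_inv_average
    (n : ℕ) (A : Matrix (Fin n) (Fin n) ℝ) (hA : A.PosDef) (hAs : A.IsSymm) :
    ((((1 : ℝ)/2) • (A + exchangeMatrix n * A * exchangeMatrix n))⁻¹).trace ≤
        (A⁻¹).trace ∧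
      (((((1 : ℝ)/2) • (A + exchangeMatrix n * A * exchangeMatrix n))⁻¹).trace =
          (A⁻¹).trace ↔ A = exchangeMatrix n * A * exchangeMatrix n) :=
  trace_inv_ge_trace_inv_average_general n A hA
end

section
/- Let A be symmetric positive definite and B symmetric, and let C = A^{-1/2} B A^{-1/2} have eigendecomposition QDQᵀ with eigenvalues λᵢ > 0; then tr(((1−s)A + sB)⁻¹) = Σᵢ (QᵀA⁻¹Q)ᵢᵢ · (1 − s + sλᵢ)⁻¹ for all s such that all 1−s+sλᵢ > 0. -/
open Matrix

/-- Diagonalized form of the trace of the inverse of a matrix pencil: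
if `A`, `B` are real symmetric positive definite, `S = A^{-1/2}` (i.e. `S` is
symmetric positive definite with `S·S = A⁻¹`), and `C = S B S` has orthogonal
eigendecomposition `C = Q D Qᵀ` with positive eigenvalues `λᵢ`, then for every `s`
with all `1 − s + s·λᵢ > 0`,
`tr(((1−s)A + sB)⁻¹) = Σᵢ (QᵀA⁻¹Q)ᵢᵢ · (1 − s + s·λᵢ)⁻¹`. -/
theorem trace_inv_pencil_diagonalized
    (n : ℕ) (A B S Q : Matrix (Fin n) (Fin n) ℝ) (lam : Fin n → ℝ)
    (hA : A.PosDef) (hAs : A.IsSymm) (hB : B.PosDef) (hBs : B.IsSymm)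
    (hS : S.PosDef) (hSs : S.IsSymm) (hSsq : S * S = A⁻¹)
    (hQ : Q * Qᵀ = 1)
    (hlam : ∀ i, 0 < lam i)
    (hC : S * B * S = Q * Matrix.diagonal lam * Qᵀ)
    (s : ℝ) (hs : ∀ i, 0 < 1 - s + s * lam i) :
    (((1 - s) • A + s • B)⁻¹).trace =
      ∑ i, (Qᵀ * A⁻¹ * Q) i i * (1 - s + s * lam i)⁻¹ := by
  have hAd : IsUnit A.det := hA.det_pos.ne'.isUnit
  have hSd : IsUnit S.det := hS.det_pos.ne'.isUnit
  have hAinv : A * A⁻¹ = 1 := A.mul_nonsing_inv hAd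
  have hAinv' : A⁻¹ * A = 1 := A.nonsing_inv_mul hAd
  have hSinv : S * S⁻¹ = 1 := S.mul_nonsing_inv hSd
  have hSinv' : S⁻¹ * S = 1 := S.nonsing_inv_mul hSd
  have hQ' : Qᵀ * Q = 1 := mul_eq_one_comm.mp hQ
  have hcommInv : S * A⁻¹ = A⁻¹ * S := by rw [← hSsq, Matrix.mul_assoc]
  have hcomm : A * S = S * A := by
    calc A * S = A * S * (A⁻¹ * A) := by rw [hAinv', Matrix.mul_one]
    _ = A * (S * A⁻¹) * A := by simp only [Matrix.mul_assoc]
    _ = A * (A⁻¹ * S) * A := by rw [hcommInv]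
    _ = (A * A⁻¹) * (S * A) := by simp only [Matrix.mul_assoc]
    _ = S * A := by rw [hAinv, Matrix.one_mul]
  have hSAS : S * (A * S) = 1 := by
    rw [hcomm, ← Matrix.mul_assoc, hSsq, hAinv']
  set F : Matrix (Fin n) (Fin n) ℝ := Matrix.diagonal (fun i => 1 - s + s * lam i) with hF
  set Fi : Matrix (Fin n) (Fin n) ℝ := Matrix.diagonal (fun i => (1 - s + s * lam i)⁻¹) with hFi
  have hFFi : F * Fi = 1 := by
    rw [hF, hFi, Matrix.diagonal_mul_diagonal]
    ext i j
    by_cases h : i = j <;>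
      simp [Matrix.diagonal_apply, Matrix.one_apply, h, mul_inv_cancel₀ (hs j).ne']
  set M : Matrix (Fin n) (Fin n) ℝ := (1 - s) • A + s • B with hM
  have hC' : S * (B * S) = Q * (Matrix.diagonal lam * Qᵀ) := by
    simpa only [Matrix.mul_assoc] using hC
  have hSMS : S * M * S = Q * F * Qᵀ := by
    have hFdecomp : F = (1 - s) • (1 : Matrix (Fin n) (Fin n) ℝ) + s • Matrix.diagonal lam := by
      rw [hF]
      ext i j
      by_cases h : i = j <;>
        simp [Matrix.diagonal, h, Matrix.one_apply, mul_comm]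
    rw [hM, hFdecomp]
    simp only [Matrix.mul_add, Matrix.add_mul, Matrix.mul_smul, Matrix.smul_mul,
      Matrix.mul_assoc, Matrix.mul_one, Matrix.one_mul, hSAS, hC', hQ]
  have hMeq : M = S⁻¹ * (Q * F * Qᵀ) * S⁻¹ := by
    rw [← hSMS]
    calc M = (S⁻¹ * S) * M * (S * S⁻¹) := by rw [hSinv', hSinv, Matrix.one_mul, Matrix.mul_one]
    _ = S⁻¹ * (S * M * S) * S⁻¹ := by simp only [Matrix.mul_assoc]
  set W : Matrix (Fin n) (Fin n) ℝ := S * (Q * Fi * Qᵀ) * S with hW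
  have c1 : ∀ X : Matrix (Fin n) (Fin n) ℝ, S⁻¹ * (S * X) = X := fun X => by
    rw [← Matrix.mul_assoc, hSinv', Matrix.one_mul]
  have c2 : ∀ X : Matrix (Fin n) (Fin n) ℝ, Qᵀ * (Q * X) = X := fun X => by
    rw [← Matrix.mul_assoc, hQ', Matrix.one_mul]
  have c3 : ∀ X : Matrix (Fin n) (Fin n) ℝ, F * (Fi * X) = X := fun X => by
    rw [← Matrix.mul_assoc, hFFi, Matrix.one_mul]
  have c4 : ∀ X : Matrix (Fin n) (Fin n) ℝ, Q * (Qᵀ * X) = X := fun X => by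
    rw [← Matrix.mul_assoc, hQ, Matrix.one_mul]
  have hMW : M * W = 1 := by
    rw [hMeq, hW]
    simp only [Matrix.mul_assoc, c1, c2, c3, c4, hSinv']
  have hMinv : M⁻¹ = W := Matrix.inv_eq_right_inv hMW
  rw [hMinv, hW]
  have htr : (S * (Q * Fi * Qᵀ) * S).trace = ((Qᵀ * A⁻¹ * Q) * Fi).trace := by
    rw [Matrix.trace_mul_comm, ← Matrix.mul_assoc, hSsq]
    rw [show A⁻¹ * (Q * Fi * Qᵀ) = (A⁻¹ * Q * Fi) * Qᵀ by simp only [Matrix.mul_assoc]]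
    rw [Matrix.trace_mul_comm]
    simp only [Matrix.mul_assoc]
  rw [htr, hFi]
  simp [Matrix.trace, Matrix.diag, Matrix.mul_diagonal]
end

section
/- Let K ≥ 2 and δ > 0 with (K−1)δ < 2, and let A be the K×K symmetric matrix with entries A(i,j) = 1 − |i−j|·δ. Then A is invertible and its inverse is (1/(2δ)) times the tridiagonal-plus-corners matrix with diagonal entries (1−μ, 2, 2, …, 2, 1−μ), entries −1 on the first super- and sub-diagonals, entry −μ in positions (1,K) and (K,1), and zeros elsewhere, where μ = δ/((K−1)δ − 2). -/
open Matrix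

/-- equally-divided delay correlation matrix: `A(i,j) = 1 − |i−j|·δ`. -/
noncomputable def delayCorrMatrix (K : ℕ) (δ : ℝ) : Matrix (Fin K) (Fin K) ℝ :=
  Matrix.of fun i j => 1 - |(i : ℝ) - (j : ℝ)| * δ

/-- The claimed inverse: `(1/(2δ))` times the tridiagonal-plus-corners matrix with
diagonal `(1−μ, 2, …, 2, 1−μ)`, `−1` on the first first super- and sub-diagonals, `−μ` in the
corners `(1,K)` and `(K,1)`, where `μ = δ/((K−1)δ − 2)` (overlapping contributions add,
which only matters for `K = 2`). -/
noncomputable def delayCorrInv (K : ℕ) (δ : ℝ) : Matrix (Fin K) (Fin K) ℝ :=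
  let μ : ℝ := δ / ((K - 1 : ℝ) * δ - 2)
  Matrix.of fun i j =>
    (1 / (2 * δ)) *
      ((if i = j then (2 : ℝ) else 0) +
        (if i = j ∧ ((i : ℕ) = 0 ∨ (i : ℕ) = K - 1) then -1 - μ else 0) +
        (if (i : ℕ) + 1 = (j : ℕ) ∨ (j : ℕ) + 1 = (i : ℕ) then -1 else 0) +
        (if ((i : ℕ) = 0 ∧ (j : ℕ) = K - 1) ∨ ((i : ℕ) = K - 1 ∧ (j : ℕ) = 0)
          then -μ else 0))

/-!
Column `j` of `delayCorrMatrix K δ` samples the tent `f x = 1 - |x - j| δ`, whose second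
difference `2 f x - f (x - 1) - f (x + 1)` is `2δ` at `x = j` and `0` at every other integer.
`2δ • delayCorrInv K δ` takes this second difference in the interior rows. In the two boundary
rows the corner entries `-μ` stand in for the missing neighbours `f (-1) = f 0 - δ` and
`f K = f (K - 1) - δ`: since `f 0 + f (K - 1) = 2 - (K - 1) δ` whatever `j` is, the choice of `μ`
gives `μ (f 0 + f (K - 1)) = -δ`.
-/

open Finset

lemma sum_three_ite_val_mul {K : ℕ} (f : ℤ → ℝ) {a b c : ℕ} (ha : a < K) (hb : b < K)
    (hc : c < K) (x y z : ℝ) :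
    ∑ k : Fin K, ((if (k : ℕ) = a then x else 0) + (if (k : ℕ) = b then y else 0) +
      (if (k : ℕ) = c then z else 0)) * f k = x * f a + y * f b + z * f c := by
  have key : ∀ {n : ℕ} (hn : n < K) (w : ℝ),
      ∑ k : Fin K, (if (k : ℕ) = n then w else 0) * f k = w * f n := by
    intro n hn w
    rw [sum_eq_single ⟨n, hn⟩ (fun k _ hk => by rw [if_neg (fun h => hk (Fin.ext h)), zero_mul])
      (by simp)]
    simp
  simp only [add_mul, sum_add_distrib, key ha, key hb, key hc]

-- `2δ • delayCorrInv K δ`, with `μ` free: the Laplacian of the path graph minus `μ` times the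
-- all-ones matrix on the two corner indices `0` and `K - 1`.
def cornerSecondDiff (K : ℕ) (μ : ℝ) : Matrix (Fin K) (Fin K) ℝ :=
  Matrix.of fun i j =>
    (if i = j then (2 : ℝ) else 0) +
      (if i = j ∧ ((i : ℕ) = 0 ∨ (i : ℕ) = K - 1) then -1 - μ else 0) +
      (if (i : ℕ) + 1 = (j : ℕ) ∨ (j : ℕ) + 1 = (i : ℕ) then -1 else 0) +
      (if ((i : ℕ) = 0 ∧ (j : ℕ) = K - 1) ∨ ((i : ℕ) = K - 1 ∧ (j : ℕ) = 0)
        then -μ else 0)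

lemma delayCorrInv_eq_smul (K : ℕ) (δ : ℝ) :
    delayCorrInv K δ = (1 / (2 * δ)) • cornerSecondDiff K (δ / ((K - 1 : ℝ) * δ - 2)) :=
  rfl

section
variable {K : ℕ} (μ : ℝ) (k : Fin K)

lemma cornerSecondDiff_apply_first {i : Fin K} (hK : 2 ≤ K) (hi : (i : ℕ) = 0) :
    cornerSecondDiff K μ i k = (if (k : ℕ) = 0 then 1 - μ else 0) +
      (if (k : ℕ) = 1 then -1 else 0) + (if (k : ℕ) = K - 1 then -μ else 0) := by
  simp only [cornerSecondDiff, of_apply, Fin.ext_iff]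
  split_ifs <;> first | ring1 | omega

lemma cornerSecondDiff_apply_last {i : Fin K} (hK : 2 ≤ K) (hi : (i : ℕ) = K - 1) :
    cornerSecondDiff K μ i k = (if (k : ℕ) = 0 then -μ else 0) +
      (if (k : ℕ) = K - 2 then -1 else 0) + (if (k : ℕ) = K - 1 then 1 - μ else 0) := by
  simp only [cornerSecondDiff, of_apply, Fin.ext_iff]
  split_ifs <;> first | ring1 | omega

lemma cornerSecondDiff_apply_interior {i : Fin K} (hi₀ : 0 < (i : ℕ)) (hi : (i : ℕ) < K - 1) :
    cornerSecondDiff K μ i k = (if (k : ℕ) = i - 1 then -1 else 0) +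
      (if (k : ℕ) = i then 2 else 0) + (if (k : ℕ) = i + 1 then -1 else 0) := by
  simp only [cornerSecondDiff, of_apply, Fin.ext_iff]
  split_ifs <;> first | ring1 | omega

end

lemma cornerSecondDiff_mulVec {K : ℕ} (hK : 2 ≤ K) (μ : ℝ) (f : ℤ → ℝ)
    (hleft : f (-1) = f 0 + μ * (f 0 + f (K - 1)))
    (hright : f K = f (K - 1) + μ * (f 0 + f (K - 1))) (i : Fin K) :
    (cornerSecondDiff K μ *ᵥ fun k => f k) i = 2 * f i - f (i - 1) - f (i + 1) := by
  simp only [mulVec, dotProduct]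
  have hK1 : ((K - 1 : ℕ) : ℤ) = K - 1 := by omega
  rcases Nat.eq_zero_or_pos (i : ℕ) with hi | hi₀
  · simp only [cornerSecondDiff_apply_first μ _ hK hi]
    rw [sum_three_ite_val_mul f (by omega : 0 < K) (by omega : 1 < K) (by omega : K - 1 < K),
      hi, hK1]
    push_cast
    linear_combination hleft
  rcases eq_or_lt_of_le (Nat.le_sub_one_of_lt i.isLt) with hi | hi
  · simp only [cornerSecondDiff_apply_last μ _ hK hi]
    rw [sum_three_ite_val_mul f (by omega : 0 < K) (by omega : K - 2 < K)
        (by omega : K - 1 < K), hi, hK1, show ((K - 2 : ℕ) : ℤ) = K - 1 - 1 by omega,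
      sub_add_cancel]
    push_cast
    linear_combination hright
  · simp only [cornerSecondDiff_apply_interior μ _ hi₀ hi]
    rw [sum_three_ite_val_mul f (by omega : (i : ℕ) - 1 < K) i.isLt
        (by omega : (i : ℕ) + 1 < K), Nat.cast_sub hi₀]
    push_cast
    ring

lemma abs_sub_one_add_abs_add_one (x : ℤ) :
    |x - 1| + |x + 1| = 2 * |x| + if x = 0 then 2 else 0 := by
  split_ifs with h
  · simp [h]
  · rcases abs_cases (x - 1) with h1 | h1 <;> rcases abs_cases (x + 1) with h2 | h2 <;>
      rcases abs_cases x with h3 | h3 <;> omega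

def tent (δ : ℝ) (c x : ℤ) : ℝ := 1 - |(x : ℝ) - c| * δ

section
variable (δ : ℝ)

lemma tent_second_diff (c x : ℤ) :
    2 * tent δ c x - tent δ c (x - 1) - tent δ c (x + 1) = if x = c then 2 * δ else 0 := by
  have h := abs_sub_one_add_abs_add_one (x - c)
  simp only [sub_eq_zero] at h
  have hR : |(x : ℝ) - c - 1| + |(x : ℝ) - c + 1| =
      2 * |(x : ℝ) - c| + if x = c then 2 else 0 := by
    exact_mod_cast h
  simp only [tent]
  push_cast [sub_right_comm _ (1 : ℝ), add_sub_right_comm _ (1 : ℝ)]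
  split_ifs at hR ⊢ <;> linear_combination δ * hR

lemma tent_sub_one {c x : ℤ} (h : x ≤ c) : tent δ c (x - 1) = tent δ c x - δ := by
  have hR : (x : ℝ) ≤ c := by exact_mod_cast h
  simp only [tent]
  rw [abs_of_nonpos (by push_cast; linarith), abs_of_nonpos (by linarith)]
  push_cast
  ring

lemma tent_add_one {c x : ℤ} (h : c ≤ x) : tent δ c (x + 1) = tent δ c x - δ := by
  have hR : (c : ℝ) ≤ x := by exact_mod_cast h
  simp only [tent]
  rw [abs_of_nonneg (by push_cast; linarith), abs_of_nonneg (by linarith)]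
  push_cast
  ring

lemma tent_zero_add_tent {c n : ℤ} (h₀ : 0 ≤ c) (hn : c ≤ n) :
    tent δ c 0 + tent δ c n = 2 - n * δ := by
  have h₀R : (0 : ℝ) ≤ c := by exact_mod_cast h₀
  have hnR : (c : ℝ) ≤ n := by exact_mod_cast hn
  simp only [tent]
  rw [abs_of_nonpos (by push_cast; linarith), abs_of_nonneg (by linarith)]
  push_cast
  ring

end

lemma delayCorrMatrix_apply (K : ℕ) (δ : ℝ) (k j : Fin K) :
    delayCorrMatrix K δ k j = tent δ j k := by
  simp [delayCorrMatrix, tent]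

lemma delayCorrInv_mul_delayCorrMatrix {K : ℕ} (hK : 2 ≤ K) {δ : ℝ} (hδ : δ ≠ 0)
    (hKδ : (K - 1 : ℝ) * δ ≠ 2) : delayCorrInv K δ * delayCorrMatrix K δ = 1 := by
  ext i j
  have hj₀ : (0 : ℤ) ≤ j := by positivity
  have hjK : (j : ℤ) ≤ K - 1 := by omega
  have hμ : δ / ((K - 1 : ℝ) * δ - 2) * (tent δ j 0 + tent δ j (K - 1)) = -δ := by
    rw [tent_zero_add_tent δ hj₀ hjK]
    push_cast
    rw [div_mul_eq_mul_div, div_eq_iff (sub_ne_zero.2 hKδ)]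
    ring
  have hleft := tent_sub_one δ hj₀
  have hright := tent_add_one δ hjK
  rw [zero_sub] at hleft
  rw [sub_add_cancel] at hright
  calc (delayCorrInv K δ * delayCorrMatrix K δ) i j
      = 1 / (2 * δ) *
          (cornerSecondDiff K (δ / ((K - 1 : ℝ) * δ - 2)) *ᵥ fun k => tent δ j k) i := by
        rw [delayCorrInv_eq_smul, Matrix.smul_mul, Matrix.smul_apply, smul_eq_mul]
        simp only [mul_apply, mulVec, dotProduct, delayCorrMatrix_apply]
    _ = 1 / (2 * δ) * if (i : ℤ) = j then 2 * δ else 0 := by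
        rw [cornerSecondDiff_mulVec hK _ _ (by linear_combination hleft - hμ)
          (by linear_combination hright - hμ), tent_second_diff]
    _ = (1 : Matrix (Fin K) (Fin K) ℝ) i j := by
        simp only [one_apply, Nat.cast_inj, Fin.val_inj]
        split_ifs
        · exact one_div_mul_cancel (mul_ne_zero two_ne_zero hδ)
        · exact mul_zero _

/-- For `K ≥ 2`, `δ > 0`, `(K−1)δ < 2`, the matrix `A(i,j) = 1 − |i−j|δ` is invertible
with the explicit tridiagonal-plus-corners inverse. -/
theorem delayCorrMatrix_inv (K : ℕ) (hK : 2 ≤ K) (δ : ℝ) (hδ : 0 < δ)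
    (hKδ : (K - 1 : ℝ) * δ < 2) :
    IsUnit (delayCorrMatrix K δ).det ∧ (delayCorrMatrix K δ)⁻¹ = delayCorrInv K δ := by
  have hAB : delayCorrMatrix K δ * delayCorrInv K δ = 1 :=
    mul_eq_one_comm.mp (delayCorrInv_mul_delayCorrMatrix hK hδ.ne' hKδ.ne)
  exact ⟨isUnit_det_of_right_inverse hAB, inv_eq_right_inv hAB⟩
end

section
/- Let K ≥ 2, δ > 0, (K−1)δ < 2, and let A be the K×K matrix with entries A(i,j) = 1 − |i−j|·δ. Then tr(A⁻¹) = (K−1)/δ − 1/((K−1)δ − 2). -/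
open Matrix

set_option maxHeartbeats 1000000

noncomputable def delayInv (K : ℕ) (δ μ : ℝ) : Matrix (Fin K) (Fin K) ℝ :=
  Matrix.of fun i j =>
    (1/(2*δ)) * ((if (i:ℕ) = (j:ℕ) then 2 else 0)
      - (if (i:ℕ)+1 = (j:ℕ) then 1 else 0) - (if (j:ℕ)+1 = (i:ℕ) then 1 else 0)
      - (1+μ) * ((if (i:ℕ)=0 ∧ (j:ℕ)=0 then 1 else 0) + (if (i:ℕ)=K-1 ∧ (j:ℕ)=K-1 then 1 else 0))
      - μ * ((if (i:ℕ)=0 ∧ (j:ℕ)=K-1 then 1 else 0) + (if (i:ℕ)=K-1 ∧ (j:ℕ)=0 then 1 else 0)))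

lemma sum_pick (K m : ℕ) (hm : m < K) (f : ℕ → ℝ) :
    (∑ n ∈ Finset.range K, if n = m then f n else 0) = f m := by
  rw [Finset.sum_ite_eq' (Finset.range K) m f]
  simp [hm]

lemma key (K : ℕ) (hK : 2 ≤ K) (δ μ : ℝ) (hδ : 0 < δ)
    (hμ : μ * (((K:ℝ)-1)*δ - 2) = δ) :
    delayCorrMatrix K δ * delayInv K δ μ = 1 := by
  ext i j
  rw [Matrix.mul_apply, Matrix.one_apply]
  have hiK : (i:ℕ) < K := i.isLt
  have hjK : (j:ℕ) < K := j.isLt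
  have hstep : (∑ k : Fin K, delayCorrMatrix K δ i k * delayInv K δ μ k j)
      = ∑ n ∈ Finset.range K,
        (1 - |(i:ℝ) - (n:ℝ)| * δ) * ((1/(2*δ)) * ((if n = (j:ℕ) then 2 else 0)
      - (if n+1 = (j:ℕ) then 1 else 0) - (if (j:ℕ)+1 = n then 1 else 0)
      - (1+μ) * ((if n=0 ∧ (j:ℕ)=0 then 1 else 0) + (if n=K-1 ∧ (j:ℕ)=K-1 then 1 else 0))
      - μ * ((if n=0 ∧ (j:ℕ)=K-1 then 1 else 0) + (if n=K-1 ∧ (j:ℕ)=0 then 1 else 0)))) :=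
    Fin.sum_univ_eq_sum_range (fun n =>
        (1 - |(i:ℝ) - (n:ℝ)| * δ) * ((1/(2*δ)) * ((if n = (j:ℕ) then 2 else 0)
      - (if n+1 = (j:ℕ) then 1 else 0) - (if (j:ℕ)+1 = n then 1 else 0)
      - (1+μ) * ((if n=0 ∧ (j:ℕ)=0 then 1 else 0) + (if n=K-1 ∧ (j:ℕ)=K-1 then 1 else 0))
      - μ * ((if n=0 ∧ (j:ℕ)=K-1 then 1 else 0) + (if n=K-1 ∧ (j:ℕ)=0 then 1 else 0))))) K
  rw [hstep]
  have hμδ : μ * (((K:ℝ)-1)*δ - 2) = δ := hμ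
  rcases Nat.lt_or_ge (j:ℕ) 1 with hj0 | hj1
  · -- j = 0
    have hj : (j:ℕ) = 0 := by omega
    have hdec : ∀ n ∈ Finset.range K,
        (1 - |(i:ℝ) - (n:ℝ)| * δ) * ((1/(2*δ)) * ((if n = (j:ℕ) then 2 else 0)
      - (if n+1 = (j:ℕ) then 1 else 0) - (if (j:ℕ)+1 = n then 1 else 0)
      - (1+μ) * ((if n=0 ∧ (j:ℕ)=0 then 1 else 0) + (if n=K-1 ∧ (j:ℕ)=K-1 then 1 else 0))
      - μ * ((if n=0 ∧ (j:ℕ)=K-1 then 1 else 0) + (if n=K-1 ∧ (j:ℕ)=0 then 1 else 0)))) =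
        (if n = 0 then (1 - |(i:ℝ) - (n:ℝ)| * δ) * ((1-μ)/(2*δ)) else 0)
        + (if n = 1 then (1 - |(i:ℝ) - (n:ℝ)| * δ) * (-(1/(2*δ))) else 0)
        + (if n = K-1 then (1 - |(i:ℝ) - (n:ℝ)| * δ) * (-(μ/(2*δ))) else 0) := by
      intro n hn
      have hnK := Finset.mem_range.mp hn
      have h1 : ¬((0:ℕ) = K-1) := by omega
      simp only [hj, h1, and_false, and_true, eq_self_iff_true, if_true, if_false,
        Nat.succ_ne_zero, Nat.add_one_ne_zero, zero_add, ite_false]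
      split_ifs <;> first | ring1 | (exfalso; omega)
    rw [Finset.sum_congr rfl hdec, Finset.sum_add_distrib, Finset.sum_add_distrib,
      sum_pick K 0 (by omega), sum_pick K 1 (by omega), sum_pick K (K-1) (by omega)]
    rw [Nat.cast_sub (by omega : 1 ≤ K)]
    push_cast
    rcases Nat.lt_or_ge (i:ℕ) 1 with hi0 | hi1
    · have hij : i = j := Fin.ext (by omega)
      have hx : (i:ℝ) = 0 := by
        have : ((i:ℕ):ℝ) = 0 := by exact_mod_cast (by omega : (i:ℕ) = 0)
        exact_mod_cast this
      have hKr : (1:ℝ) ≤ (K:ℝ) - 1 := by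
        have : (2:ℝ) ≤ (K:ℝ) := by exact_mod_cast hK
        linarith
      rw [if_pos hij, hx]
      rw [abs_of_nonpos (by linarith : (0:ℝ) - 0 ≤ 0),
        abs_of_nonpos (by linarith : (0:ℝ) - 1 ≤ 0),
        abs_of_nonpos (by linarith : (0:ℝ) - ((K:ℝ)-1) ≤ 0)]
      field_simp
      linear_combination hμ
    · have hij : i ≠ j := Fin.ne_of_val_ne (by omega)
      have hx1 : (1:ℝ) ≤ (i:ℝ) := by exact_mod_cast hi1
      have hxK : (i:ℝ) ≤ (K:ℝ) - 1 := by
        have : ((i:ℕ):ℝ) + 1 ≤ (K:ℝ) := by exact_mod_cast hiK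
        linarith
      rw [if_neg hij]
      rw [abs_of_nonneg (by linarith : (0:ℝ) ≤ (i:ℝ) - 0),
        abs_of_nonneg (by linarith : (0:ℝ) ≤ (i:ℝ) - 1),
        abs_of_nonpos (by linarith : (i:ℝ) - ((K:ℝ)-1) ≤ 0)]
      field_simp
      linear_combination hμ
  rcases Nat.lt_or_ge (j:ℕ) (K-1) with hjlt | hjtop'
  · -- interior: 1 ≤ j ≤ K-2
    have hdec : ∀ n ∈ Finset.range K,
        (1 - |(i:ℝ) - (n:ℝ)| * δ) * ((1/(2*δ)) * ((if n = (j:ℕ) then 2 else 0)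
      - (if n+1 = (j:ℕ) then 1 else 0) - (if (j:ℕ)+1 = n then 1 else 0)
      - (1+μ) * ((if n=0 ∧ (j:ℕ)=0 then 1 else 0) + (if n=K-1 ∧ (j:ℕ)=K-1 then 1 else 0))
      - μ * ((if n=0 ∧ (j:ℕ)=K-1 then 1 else 0) + (if n=K-1 ∧ (j:ℕ)=0 then 1 else 0)))) =
        (if n = (j:ℕ) then (1 - |(i:ℝ) - (n:ℝ)| * δ) * (2*(1/(2*δ))) else 0)
        + (if n = (j:ℕ)-1 then (1 - |(i:ℝ) - (n:ℝ)| * δ) * (-(1/(2*δ))) else 0)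
        + (if n = (j:ℕ)+1 then (1 - |(i:ℝ) - (n:ℝ)| * δ) * (-(1/(2*δ))) else 0) := by
      intro n hn
      have hnK := Finset.mem_range.mp hn
      have h1 : ¬((j:ℕ) = 0) := by omega
      have h2 : ¬((j:ℕ) = K-1) := by omega
      simp only [h1, h2, and_false, if_false, ite_false, add_zero, mul_zero, sub_zero]
      split_ifs <;> first | ring1 | (exfalso; omega)
    rw [Finset.sum_congr rfl hdec, Finset.sum_add_distrib, Finset.sum_add_distrib,
      sum_pick K (j:ℕ) (by omega), sum_pick K ((j:ℕ)-1) (by omega),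
      sum_pick K ((j:ℕ)+1) (by omega)]
    rw [Nat.cast_sub (by omega : 1 ≤ (j:ℕ))]
    push_cast
    rcases lt_trichotomy (i:ℕ) (j:ℕ) with hlt | heq | hgt
    · have hij : i ≠ j := Fin.ne_of_val_ne (by omega)
      have hxy : ((i:ℕ):ℝ) + 1 ≤ ((j:ℕ):ℝ) := by exact_mod_cast hlt
      rw [if_neg hij]
      rw [abs_of_nonpos (by linarith : (i:ℝ) - ((j:ℕ):ℝ) ≤ 0),
        abs_of_nonpos (by linarith : (i:ℝ) - (((j:ℕ):ℝ) - 1) ≤ 0),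
        abs_of_nonpos (by linarith : (i:ℝ) - (((j:ℕ):ℝ) + 1) ≤ 0)]
      field_simp
      ring1
    · have hij : i = j := Fin.ext heq
      have hxy : ((i:ℕ):ℝ) = ((j:ℕ):ℝ) := by exact_mod_cast heq
      rw [if_pos hij]
      rw [abs_of_nonneg (by linarith : (0:ℝ) ≤ (i:ℝ) - ((j:ℕ):ℝ)),
        abs_of_nonneg (by linarith : (0:ℝ) ≤ (i:ℝ) - (((j:ℕ):ℝ) - 1)),
        abs_of_nonpos (by linarith : (i:ℝ) - (((j:ℕ):ℝ) + 1) ≤ 0)]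
      field_simp
      linear_combination (-2)*δ*hxy
    · have hij : i ≠ j := Fin.ne_of_val_ne (by omega)
      have hxy : ((j:ℕ):ℝ) + 1 ≤ ((i:ℕ):ℝ) := by exact_mod_cast hgt
      rw [if_neg hij]
      rw [abs_of_nonneg (by linarith : (0:ℝ) ≤ (i:ℝ) - ((j:ℕ):ℝ)),
        abs_of_nonneg (by linarith : (0:ℝ) ≤ (i:ℝ) - (((j:ℕ):ℝ) - 1)),
        abs_of_nonneg (by linarith : (0:ℝ) ≤ (i:ℝ) - (((j:ℕ):ℝ) + 1))]
      field_simp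
      ring1
  · -- j = K-1
    have hj : (j:ℕ) = K-1 := by omega
    have hdec : ∀ n ∈ Finset.range K,
        (1 - |(i:ℝ) - (n:ℝ)| * δ) * ((1/(2*δ)) * ((if n = (j:ℕ) then 2 else 0)
      - (if n+1 = (j:ℕ) then 1 else 0) - (if (j:ℕ)+1 = n then 1 else 0)
      - (1+μ) * ((if n=0 ∧ (j:ℕ)=0 then 1 else 0) + (if n=K-1 ∧ (j:ℕ)=K-1 then 1 else 0))
      - μ * ((if n=0 ∧ (j:ℕ)=K-1 then 1 else 0) + (if n=K-1 ∧ (j:ℕ)=0 then 1 else 0)))) =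
        (if n = K-1 then (1 - |(i:ℝ) - (n:ℝ)| * δ) * ((1-μ)/(2*δ)) else 0)
        + (if n = K-2 then (1 - |(i:ℝ) - (n:ℝ)| * δ) * (-(1/(2*δ))) else 0)
        + (if n = 0 then (1 - |(i:ℝ) - (n:ℝ)| * δ) * (-(μ/(2*δ))) else 0) := by
      intro n hn
      have hnK := Finset.mem_range.mp hn
      have h1 : ¬(K-1 = 0) := by omega
      simp only [hj, h1, and_false, and_true, eq_self_iff_true, if_true, if_false, ite_false]
      split_ifs <;> first | ring1 | (exfalso; omega)
    rw [Finset.sum_congr rfl hdec, Finset.sum_add_distrib, Finset.sum_add_distrib,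
      sum_pick K (K-1) (by omega), sum_pick K (K-2) (by omega), sum_pick K 0 (by omega)]
    rw [Nat.cast_sub (by omega : 1 ≤ K), Nat.cast_sub (by omega : 2 ≤ K)]
    push_cast
    have hKr : (2:ℝ) ≤ (K:ℝ) := by exact_mod_cast hK
    rcases Nat.lt_or_ge (i:ℕ) (K-1) with hi | hi
    · have hij : i ≠ j := Fin.ne_of_val_ne (by omega)
      have hxy : ((i:ℕ):ℝ) + 1 ≤ (K:ℝ) - 1 := by
        have : ((i:ℕ):ℝ) + 1 ≤ ((K-1:ℕ):ℝ) := by exact_mod_cast hi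
        rw [Nat.cast_sub (by omega : 1 ≤ K)] at this
        push_cast at this; linarith
      have hx0 : (0:ℝ) ≤ ((i:ℕ):ℝ) := Nat.cast_nonneg _
      rw [if_neg hij]
      rw [abs_of_nonpos (by linarith : (i:ℝ) - ((K:ℝ) - 1) ≤ 0),
        abs_of_nonpos (by linarith : (i:ℝ) - ((K:ℝ) - 2) ≤ 0),
        abs_of_nonneg (by linarith : (0:ℝ) ≤ (i:ℝ) - 0)]
      field_simp
      linear_combination hμ
    · have hieq : (i:ℕ) = K-1 := by omega
      have hij : i = j := Fin.ext (by omega)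
      have hxy : ((i:ℕ):ℝ) = (K:ℝ) - 1 := by
        have : ((i:ℕ):ℝ) = ((K-1:ℕ):ℝ) := by exact_mod_cast hieq
        rw [Nat.cast_sub (by omega : 1 ≤ K)] at this
        push_cast at this; linarith
      rw [if_pos hij]
      rw [abs_of_nonneg (by linarith : (0:ℝ) ≤ (i:ℝ) - ((K:ℝ) - 1)),
        abs_of_nonneg (by linarith : (0:ℝ) ≤ (i:ℝ) - ((K:ℝ) - 2)),
        abs_of_nonneg (by linarith : (0:ℝ) ≤ (i:ℝ) - 0)]
      rw [hxy]
      field_simp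
      linear_combination hμ - 2*δ*μ*hxy + 2*δ*μ*hxy

/-- For `K ≥ 2`, `δ > 0`, `(K−1)δ < 2`, the matrix `A(i,j) = 1 − |i−j|δ` satisfies
`tr(A⁻¹) = (K−1)/δ − 1/((K−1)δ − 2)`. -/
theorem trace_delayCorrMatrix_inv (K : ℕ) (hK : 2 ≤ K) (δ : ℝ) (hδ : 0 < δ)
    (hKδ : (K - 1 : ℝ) * δ < 2) :
    ((delayCorrMatrix K δ)⁻¹).trace =
      (K - 1 : ℝ) / δ - 1 / ((K - 1 : ℝ) * δ - 2) := by
  have hKr : (2:ℝ) ≤ (K:ℝ) := by exact_mod_cast hK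
  have hden : ((K:ℝ)-1)*δ - 2 ≠ 0 := ne_of_lt (by linarith)
  have hμ : (δ / (((K:ℝ)-1)*δ - 2)) * (((K:ℝ)-1)*δ - 2) = δ := div_mul_cancel₀ _ hden
  have hinv : (delayCorrMatrix K δ)⁻¹ = delayInv K δ (δ / (((K:ℝ)-1)*δ - 2)) :=
    Matrix.inv_eq_right_inv (key K hK δ _ hδ hμ)
  rw [hinv, Matrix.trace]
  set μ : ℝ := δ / (((K:ℝ)-1)*δ - 2) with hμdef
  have hstep : (∑ i : Fin K, Matrix.diag (delayInv K δ μ) i)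
      = ∑ n ∈ Finset.range K, (1/(2*δ)) * ((if n = n then 2 else 0)
      - (if n+1 = n then 1 else 0) - (if n+1 = n then 1 else 0)
      - (1+μ) * ((if n=0 ∧ n=0 then 1 else 0) + (if n=K-1 ∧ n=K-1 then 1 else 0))
      - μ * ((if n=0 ∧ n=K-1 then 1 else 0) + (if n=K-1 ∧ n=0 then 1 else 0))) :=
    Fin.sum_univ_eq_sum_range (fun n => (1/(2*δ)) * ((if n = n then 2 else 0)
      - (if n+1 = n then 1 else 0) - (if n+1 = n then 1 else 0)
      - (1+μ) * ((if n=0 ∧ n=0 then 1 else 0) + (if n=K-1 ∧ n=K-1 then 1 else 0))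
      - μ * ((if n=0 ∧ n=K-1 then 1 else 0) + (if n=K-1 ∧ n=0 then 1 else 0)))) K
  rw [hstep]
  have hdec : ∀ n ∈ Finset.range K, (1/(2*δ)) * ((if n = n then 2 else 0)
      - (if n+1 = n then 1 else 0) - (if n+1 = n then 1 else 0)
      - (1+μ) * ((if n=0 ∧ n=0 then 1 else 0) + (if n=K-1 ∧ n=K-1 then 1 else 0))
      - μ * ((if n=0 ∧ n=K-1 then 1 else 0) + (if n=K-1 ∧ n=0 then 1 else 0))) =
      (1/δ) + ((if n = 0 then -(1+μ)*(1/(2*δ)) else 0)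
        + (if n = K-1 then -(1+μ)*(1/(2*δ)) else 0)) := by
    intro n hn
    have hnK := Finset.mem_range.mp hn
    split_ifs <;> first | ring1 | (exfalso; omega)
  rw [Finset.sum_congr rfl hdec, Finset.sum_add_distrib, Finset.sum_add_distrib,
    Finset.sum_const, Finset.card_range, nsmul_eq_mul,
    sum_pick K 0 (by omega) (fun _ => -(1+μ)*(1/(2*δ))),
    sum_pick K (K-1) (by omega) (fun _ => -(1+μ)*(1/(2*δ)))]
  rw [hμdef]
  field_simp
  ring
end

section
/- Let K ≥ 2 and δ₁,…,δ_{K−1} > 0 with Σδᵢ ≤ 1, and let A be the K×K symmetric matrix with A(i,i) = 1 and A(i,j) = 1 − Σ_{k=min(i,j)}^{max(i,j)−1} δ_k for i ≠ j. Then A is positive definite. -/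
/-!
With `r = 1 - ∑ δ ≥ 0`, the entry `1 - ∑_{min i j ≤ k < max i j} δ k` is `r` plus the total weight
`δ k` of the cuts `k` (between positions `k` and `k + 1`) that do not separate `i` and `j`. Hence
`A = r • 𝟙𝟙ᵀ + Cᵀ D C`, where the rows of `C` are the indicators of the two sides of each cut and
`D = diag δ` is positive definite. The prefix sums of `x` can be read off `C x` (the full sum as the
sum of both sides of cut `0`, which exists since `K ≥ 2`), so `C` is injective and `Cᵀ D C` is
positive definite.
-/

open Matrix

open Finset in
theorem eq_zero_of_forall_sum_Iic_eq_zero {ι M : Type*} [PartialOrder ι] [LocallyFiniteOrderBot ι]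
    [WellFoundedLT ι] [DecidableEq ι] [AddCommMonoid M] {x : ι → M}
    (h : ∀ i, ∑ j ∈ Iic i, x j = 0) : x = 0 := by
  suffices ∀ i, x i = 0 from funext this
  intro i
  induction i using WellFoundedLT.induction with
  | _ i ih =>
    rw [← h i, ← Iio_insert, sum_insert notMem_Iio_self,
      sum_eq_zero fun j hj => ih j (mem_Iio.1 hj), add_zero]

section Cuts

variable {K : ℕ}

/-- Rows `inl k` and `inr k` are the indicators of the two sides `{i ≤ k}` and `{k < i}` of the
cut between positions `k` and `k + 1`. -/
def cutMatrix (K : ℕ) : Matrix (Fin (K - 1) ⊕ Fin (K - 1)) (Fin K) ℝ :=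
  of <| Sum.elim (fun k i => if (i : ℕ) ≤ k then 1 else 0) (fun k i => if (k : ℕ) < i then 1 else 0)

def cutWeight (K : ℕ) (δ : ℕ → ℝ) : Fin (K - 1) ⊕ Fin (K - 1) → ℝ :=
  Sum.elim (δ ∘ Fin.val) (δ ∘ Fin.val)

theorem cutMatrix_mulVec_inl (x : Fin K → ℝ) (k : Fin (K - 1)) :
    (cutMatrix K *ᵥ x) (.inl k) = ∑ i : Fin K, if (i : ℕ) ≤ k then x i else 0 := by
  simp [cutMatrix, mulVec, dotProduct]

theorem cutMatrix_mulVec_inr (x : Fin K → ℝ) (k : Fin (K - 1)) :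
    (cutMatrix K *ᵥ x) (.inr k) = ∑ i : Fin K, if (k : ℕ) < i then x i else 0 := by
  simp [cutMatrix, mulVec, dotProduct]

theorem cutMatrix_mulVec_injective (hK : 2 ≤ K) : Function.Injective (cutMatrix K).mulVec := by
  refine (injective_iff_map_eq_zero (cutMatrix K).mulVecLin).2 fun x hx => ?_
  have hCx (l) : (cutMatrix K *ᵥ x) l = 0 := congrFun hx l
  refine eq_zero_of_forall_sum_Iic_eq_zero fun i => ?_
  rcases lt_or_ge (i : ℕ) (K - 1) with hi | hi
  · rw [← Finset.filter_ge_eq_Iic, Finset.sum_filter]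
    simpa only [Fin.le_def, cutMatrix_mulVec_inl] using hCx (.inl ⟨i, hi⟩)
  · have hIic : Finset.Iic i = Finset.univ :=
      Finset.eq_univ_of_forall fun j => Finset.mem_Iic.2 (Fin.le_def.2 (by omega))
    have both_sides := congrArg₂ (· + ·) (hCx (.inl ⟨0, by omega⟩)) (hCx (.inr ⟨0, by omega⟩))
    simp only [cutMatrix_mulVec_inl, cutMatrix_mulVec_inr, ← Finset.sum_add_distrib,
      add_zero] at both_sides
    rw [hIic, ← both_sides]
    refine Finset.sum_congr rfl fun j _ => ?_
    split_ifs <;> first | omega | simp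

theorem gram_cutMatrix_apply (δ : ℕ → ℝ) (i j : Fin K) :
    ((cutMatrix K)ᴴ * diagonal (cutWeight K δ) * cutMatrix K) i j =
      ∑ k ∈ Finset.range (K - 1), δ k - ∑ k ∈ Finset.Ico (min (i : ℕ) j) (max (i : ℕ) j), δ k := by
  have same_side (k : ℕ) :
      1 - (if k ∈ Finset.Ico (min (i : ℕ) j) (max (i : ℕ) j) then 1 else 0) =
        (if (i : ℕ) ≤ k then (1 : ℝ) else 0) * (if (j : ℕ) ≤ k then 1 else 0) +
          (if k < (i : ℕ) then 1 else 0) * (if k < (j : ℕ) then 1 else 0) := by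
    simp only [Finset.mem_Ico, min_le_iff, lt_max_iff]
    split_ifs <;> first | omega | norm_num
  have hIco : Finset.Ico (min (i : ℕ) j) (max (i : ℕ) j) ⊆ Finset.range (K - 1) := fun k hk => by
    simp only [Finset.mem_Ico, Finset.mem_range, lt_max_iff] at hk ⊢
    omega
  have weighted : ∑ k ∈ Finset.range (K - 1), δ k -
        ∑ k ∈ Finset.Ico (min (i : ℕ) j) (max (i : ℕ) j), δ k =
      ∑ k ∈ Finset.range (K - 1), δ k *
        (1 - if k ∈ Finset.Ico (min (i : ℕ) j) (max (i : ℕ) j) then 1 else 0) := by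
    simp only [mul_sub, mul_one, mul_ite, mul_zero, Finset.sum_sub_distrib, Finset.sum_ite_mem,
      Finset.inter_eq_right.2 hIco]
  rw [weighted]
  simp only [same_side]
  rw [← Fin.sum_univ_eq_sum_range]
  simp only [mul_apply, Fintype.sum_sum_type, ← Finset.sum_add_distrib, conjTranspose_apply,
    star_trivial, diagonal_apply, mul_ite, mul_zero, Finset.sum_ite_eq', Finset.mem_univ, if_true,
    Sum.elim_inl, Sum.elim_inr, cutMatrix, cutWeight, of_apply, Function.comp_apply]
  refine Finset.sum_congr rfl fun k _ => ?_
  split_ifs <;> ring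

end Cuts

theorem delayGram_eq_smul_vecMulVec_add_gram {K : ℕ} (δ : ℕ → ℝ) :
    (of fun i j : Fin K => 1 - ∑ k ∈ Finset.Ico (min (i : ℕ) (j : ℕ)) (max (i : ℕ) (j : ℕ)), δ k) =
      (1 - ∑ k ∈ Finset.range (K - 1), δ k) • vecMulVec 1 (star 1) +
        (cutMatrix K)ᴴ * diagonal (cutWeight K δ) * cutMatrix K := by
  ext i j
  simp only [of_apply, Matrix.add_apply, Matrix.smul_apply, gram_cutMatrix_apply, vecMulVec_apply,
    star_one, Pi.one_apply, mul_one, smul_eq_mul]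
  ring

/-- Gram matrix of time-shifted pulses: for consecutive normalized delay differences
`δ₁,…,δ_{K−1} > 0` with `Σ δᵢ ≤ 1`, the matrix with `A(i,i) = 1` and
`A(i,j) = 1 − Σ_{k=min(i,j)}^{max(i,j)−1} δ_k` for `i ≠ j` is positive definite. -/
theorem delayGram_posDef (K : ℕ) (hK : 2 ≤ K) (δ : ℕ → ℝ)
    (hδ : ∀ k < K - 1, 0 < δ k)
    (hsum : ∑ k ∈ Finset.range (K - 1), δ k ≤ 1) :
    (Matrix.of fun i j : Fin K =>
        1 - ∑ k ∈ Finset.Ico (min (i : ℕ) (j : ℕ)) (max (i : ℕ) (j : ℕ)), δ k).PosDef := by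
  rw [delayGram_eq_smul_vecMulVec_add_gram]
  have hD : (diagonal (cutWeight K δ)).PosDef :=
    posDef_diagonal_iff.2 fun l => by cases l <;> exact hδ _ (Fin.is_lt _)
  exact PosDef.posSemidef_add ((posSemidef_vecMulVec_self_star 1).smul (sub_nonneg.2 hsum))
    (hD.conjTranspose_mul_mul_same (cutMatrix_mulVec_injective hK))
end

section
/- For N ≥ 1, K ≥ 2, γ > 0, the minimum ZF-estimator MSE under the equally-divided delay scheme in a K-cell, N-user-per-cell system equals (N/(Kγ))·((K−1)² + 1/(2N−1)); i.e., if MSE_i(Δ) = (T/(Kγ))·((K−1)²/Δ + 1/(2T−Δ)) and Σ_{i=1}^N Δᵢ = T with Δᵢ ∈ (0,T), then (1/N)·Σᵢ MSE_i(Δᵢ) is minimized at Δᵢ = T/N for all i, with minimum value (N/(Kγ))·((K−1)² + 1/(2N−1)). -/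
/-!
Each per-group MSE is a nonnegative multiple of `(K-1)²/Δ + 1/(2T-Δ)`, a convex function of `Δ`
on `(0, 2T)`. By Jensen's inequality the average MSE over the groups is at least the MSE at the
average interval length `(Σᵢ Δᵢ)/N = T/N`, which is exactly the equally divided scheme.
-/

open Set

theorem convexOn_div_Ioi {A : ℝ} (hA : 0 ≤ A) : ConvexOn ℝ (Ioi 0) fun x : ℝ => A / x := by
  simpa [div_eq_mul_inv, zpow_neg_one] using (convexOn_zpow (𝕜 := ℝ) (-1)).smul hA

theorem convexOn_div_sub {A : ℝ} (hA : 0 ≤ A) (L : ℝ) :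
    ConvexOn ℝ (Iio L) fun x : ℝ => A / (L - x) := by
  have hpre : (AffineMap.const ℝ ℝ L - AffineMap.id ℝ ℝ) ⁻¹' Ioi 0 = Iio L := by ext; simp
  have h := (convexOn_div_Ioi hA).comp_affineMap (AffineMap.const ℝ ℝ L - AffineMap.id ℝ ℝ)
  rw [hpre] at h
  exact h

theorem ConvexOn.map_sum_div_card_le {ι : Type*} [Fintype ι] [Nonempty ι] {s : Set ℝ}
    {f : ℝ → ℝ} (hf : ConvexOn ℝ s f) {x : ι → ℝ} (hx : ∀ i, x i ∈ s) :
    f ((∑ i, x i) / Fintype.card ι) ≤ (∑ i, f (x i)) / Fintype.card ι := by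
  have hcard : (0 : ℝ) < Fintype.card ι := by exact_mod_cast Fintype.card_pos
  have h := hf.map_sum_le (t := Finset.univ) (w := fun _ => (Fintype.card ι : ℝ)⁻¹)
    (fun _ _ => by positivity) (by simp [hcard.ne']) (fun i _ => hx i)
  simpa only [smul_eq_mul, inv_mul_eq_div, ← Finset.sum_div] using h

noncomputable def groupMSE (T K γ Δ : ℝ) : ℝ :=
  T / (K * γ) * ((K - 1) ^ 2 / Δ + 1 / (2 * T - Δ))

theorem convexOn_groupMSE {T K γ : ℝ} (hT : 0 ≤ T) (hK : 0 ≤ K) (hγ : 0 ≤ γ) :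
    ConvexOn ℝ (Ioo 0 (2 * T)) (groupMSE T K γ) :=
  (((convexOn_div_Ioi (sq_nonneg (K - 1))).subset Ioo_subset_Ioi_self (convex_Ioo _ _)).add
    ((convexOn_div_sub zero_le_one _).subset Ioo_subset_Iio_self (convex_Ioo _ _))).smul
    (by positivity)

theorem groupMSE_div {T n : ℝ} (K γ : ℝ) (hT : T ≠ 0) (hn : n ≠ 0) (h2n : 2 * n - 1 ≠ 0) :
    groupMSE T K γ (T / n) = n / (K * γ) * ((K - 1) ^ 2 + 1 / (2 * n - 1)) := by
  have h : 2 * T - T / n = T * (2 * n - 1) / n := by field_simp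
  rw [groupMSE, h]
  field_simp

theorem equally_divided_min_mse_general (N K : ℕ) (hN : 1 ≤ N)
    (T γ : ℝ) (hT : 0 < T) (hγ : 0 < γ) :
    ((1 : ℝ) / N *
        ∑ _i : Fin N,
          (T / (K * γ)) * ((K - 1 : ℝ) ^ 2 / (T / N) + 1 / (2 * T - T / N)) =
      (N / (K * γ)) * ((K - 1 : ℝ) ^ 2 + 1 / (2 * N - 1))) ∧
      ∀ Δ : Fin N → ℝ, (∀ i, Δ i ∈ Set.Ioo 0 T) → ∑ i, Δ i = T →
        (N / (K * γ)) * ((K - 1 : ℝ) ^ 2 + 1 / (2 * N - 1)) ≤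
          (1 : ℝ) / N *
            ∑ i, (T / (K * γ)) * ((K - 1 : ℝ) ^ 2 / Δ i + 1 / (2 * T - Δ i)) := by
  have hN1 : (1 : ℝ) ≤ N := by exact_mod_cast hN
  have hmin : groupMSE T K γ (T / N) = N / (K * γ) * ((K - 1) ^ 2 + 1 / (2 * N - 1)) :=
    groupMSE_div K γ hT.ne' (by positivity) (by linarith)
  refine ⟨?_, fun Δ hΔ hsum => ?_⟩
  · rw [Finset.sum_const, Finset.card_univ, Fintype.card_fin, nsmul_eq_mul, one_div,
      inv_mul_cancel_left₀ (by positivity)]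
    exact hmin
  · have : Nonempty (Fin N) := ⟨⟨0, hN⟩⟩
    have hjensen := (convexOn_groupMSE hT.le K.cast_nonneg hγ.le).map_sum_div_card_le
      (x := Δ) fun i => ⟨(hΔ i).1, by linarith [(hΔ i).2]⟩
    rw [Fintype.card_fin, hsum, hmin] at hjensen
    rw [one_div_mul_eq_div]
    exact hjensen

/-- Minimum ZF-estimator MSE under the equally-divided delay scheme: with per-group
`MSE_i(Δ) = (T/(Kγ))·((K−1)²/Δ + 1/(2T−Δ))` and group interval lengths
`Δᵢ ∈ (0,T)` summing to `T`, the average `(1/N)·Σᵢ MSE_i(Δᵢ)` is minimized at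
`Δᵢ = T/N`, with minimum value `(N/(Kγ))·((K−1)² + 1/(2N−1))`. -/
theorem equally_divided_min_mse (N K : ℕ) (hN : 1 ≤ N) (hK : 2 ≤ K)
    (T γ : ℝ) (hT : 0 < T) (hγ : 0 < γ) :
    ((1 : ℝ) / N *
        ∑ _i : Fin N,
          (T / (K * γ)) * ((K - 1 : ℝ) ^ 2 / (T / N) + 1 / (2 * T - T / N)) =
      (N / (K * γ)) * ((K - 1 : ℝ) ^ 2 + 1 / (2 * N - 1))) ∧
      ∀ Δ : Fin N → ℝ, (∀ i, Δ i ∈ Set.Ioo 0 T) → ∑ i, Δ i = T →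
        (N / (K * γ)) * ((K - 1 : ℝ) ^ 2 + 1 / (2 * N - 1)) ≤
          (1 : ℝ) / N *
            ∑ i, (T / (K * γ)) * ((K - 1 : ℝ) ^ 2 / Δ i + 1 / (2 * T - Δ i)) :=
  equally_divided_min_mse_general N K hN T γ hT hγ
end
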